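/- If (M,g) satisfies the critical metric equation R·Ric − ∇²R = (3/(4(n−1)))·R²·g with R > 0, and v = −log R, then the 1-Bakry–Émery Ricci tensor Ric + ∇²v − dv⊗dv equals (3/(4(n−1)))·e^{−v}·g and in particular is nonnegative definite. -/

import Mathlib

/-- The Hessian `∇²f(v,w)` of a function on Euclidean space. -/
noncomputable def hess5 {n : ℕ} (f : EuclideanSpace ℝ (Fin n) → ℝ)
    (x v w : EuclideanSpace ℝ (Fin n)) : ℝ :=
  inner ℝ (fderiv ℝ (gradient f) x v) w

/-- If the critical metric equation `R·Ric − ∇²R = (3/(4(n−1)))·R²·g` holds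
with `R > 0` (here `Ric` is the Ricci tensor, given as a field of bilinear forms, and
`g = ⟨·,·⟩`), and `v = −log R`, then the 1-Bakry–Émery Ricci tensor
`Ric + ∇²v − dv⊗dv` equals `(3/(4(n−1)))·e^{−v}·g`, and in particular it is
nonnegative definite. -/
theorem stmt_5 (n : ℕ) (hn : 3 ≤ n)
    (R v : EuclideanSpace ℝ (Fin n) → ℝ)
    (Ric : EuclideanSpace ℝ (Fin n) → EuclideanSpace ℝ (Fin n) → EuclideanSpace ℝ (Fin n) → ℝ)
    (hR : ContDiff ℝ (⊤ : ℕ∞) R) (hRpos : ∀ x, 0 < R x)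
    (hv : ∀ x, v x = -Real.log (R x))
    (hEq : ∀ x a b, R x * Ric x a b - hess5 R x a b
      = 3 / (4 * ((n : ℝ) - 1)) * (R x) ^ 2 * (inner ℝ a b : ℝ)) :
    (∀ x a b, Ric x a b + hess5 v x a b - (fderiv ℝ v x a) * (fderiv ℝ v x b)
        = 3 / (4 * ((n : ℝ) - 1)) * Real.exp (-(v x)) * (inner ℝ a b : ℝ))
      ∧ ∀ x w, 0 ≤ Ric x w w + hess5 v x w w - (fderiv ℝ v x w) ^ 2 := by
  have hvf : v = fun y => -Real.log (R y) := funext hv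
  have hdR : ∀ y, DifferentiableAt ℝ R y := fun y => (hR.differentiable (by simp)) y
  have hne : ∀ y, R y ≠ 0 := fun y => (hRpos y).ne'
  -- derivative of v
  have hfv : ∀ y, HasFDerivAt v (-((R y)⁻¹ • fderiv ℝ R y)) y := by
    intro y
    have h1 : HasFDerivAt (fun z => Real.log (R z)) ((R y)⁻¹ • fderiv ℝ R y) y :=
      (hdR y).hasFDerivAt.log (hne y)
    rw [hvf]
    exact h1.neg
  have hfderiv_v : ∀ y, fderiv ℝ v y = -((R y)⁻¹ • fderiv ℝ R y) := fun y => (hfv y).fderiv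
  -- gradient of v
  have hgv : ∀ y, gradient v y = -((R y)⁻¹ • gradient R y) := by
    intro y
    rw [gradient, gradient, hfderiv_v y, map_neg, map_smul]
  -- differentiability of gradient R
  have hgradR : ContDiff ℝ (⊤ : ℕ∞) (gradient R) := by
    have h1 : ContDiff ℝ (⊤ : ℕ∞) (fun y => fderiv ℝ R y) := hR.fderiv_right (by simp)
    have h2 := ((InnerProductSpace.toDual ℝ
      (EuclideanSpace ℝ (Fin n))).symm.toContinuousLinearEquiv :
      StrongDual ℝ (EuclideanSpace ℝ (Fin n)) ≃L[ℝ]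
        EuclideanSpace ℝ (Fin n)).contDiff.comp h1
    exact h2
  have hdgR : ∀ y, DifferentiableAt ℝ (gradient R) y := fun y =>
    (hgradR.differentiable (by simp)) y
  -- inner of gradient
  have hginner : ∀ y (b : EuclideanSpace ℝ (Fin n)),
      (inner ℝ (gradient R y) b : ℝ) = fderiv ℝ R y b := fun y b =>
    InnerProductSpace.toDual_symm_apply
  -- Hessian of v
  have hhess : ∀ x a b, hess5 v x a b
      = -((R x)⁻¹ * hess5 R x a b) + (R x ^ 2)⁻¹ * fderiv ℝ R x a * fderiv ℝ R x b := by
    intro x a b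
    have hc : HasFDerivAt (fun y => (R y)⁻¹) (-((R x ^ 2)⁻¹ • fderiv ℝ R x)) x := by
      have := (hasFDerivAt_inv (hne x)).comp x (hdR x).hasFDerivAt
      refine (this.congr_fderiv ?_ : HasFDerivAt (fun y => (R y)⁻¹) _ x)
      ext y
      simp only [ContinuousLinearMap.neg_apply, ContinuousLinearMap.smul_apply,
        ContinuousLinearMap.coe_comp', Function.comp_apply,
        ContinuousLinearMap.toSpanSingleton_apply, smul_eq_mul]
      ring
    have hφ : HasFDerivAt (gradient R) (fderiv ℝ (gradient R) x) x := (hdgR x).hasFDerivAt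
    have hs := (hc.smul hφ).neg
    have hgv' : (fun y => -((R y)⁻¹ • gradient R y)) = gradient v := (funext hgv).symm
    rw [show -((fun y => (R y)⁻¹) • gradient R) = gradient v from hgv'] at hs
    rw [hess5, hs.fderiv]
    simp only [ContinuousLinearMap.neg_apply, ContinuousLinearMap.add_apply,
      ContinuousLinearMap.smul_apply, ContinuousLinearMap.smulRight_apply,
      ContinuousLinearMap.coe_smul', Pi.smul_apply, Pi.neg_apply, smul_eq_mul,
      inner_neg_left, inner_add_left, real_inner_smul_left, hginner]
    rw [hess5]
    ring
  have key : ∀ x a b, Ric x a b + hess5 v x a b - (fderiv ℝ v x a) * (fderiv ℝ v x b)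
      = 3 / (4 * ((n : ℝ) - 1)) * Real.exp (-(v x)) * (inner ℝ a b : ℝ) := by
    intro x a b
    have hexp : Real.exp (-(v x)) = R x := by
      rw [hv x, neg_neg, Real.exp_log (hRpos x)]
    have hr := hne x
    have hRic : Ric x a b = ((hess5 R x a b)
        + 3 / (4 * ((n : ℝ) - 1)) * (R x) ^ 2 * (inner ℝ a b : ℝ)) / R x := by
      rw [eq_div_iff hr]
      linarith [hEq x a b]
    rw [hexp, hRic, hhess x a b, hfderiv_v x]
    simp only [ContinuousLinearMap.neg_apply, ContinuousLinearMap.smul_apply, smul_eq_mul]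
    field_simp
    ring
  refine ⟨key, fun x w => ?_⟩
  have := key x w w
  rw [← sq] at this
  rw [this]
  have h1 : (0:ℝ) ≤ 3 / (4 * ((n : ℝ) - 1)) := by
    have h3 : (3:ℝ) ≤ (n:ℝ) := by exact_mod_cast hn
    have h4 : (0:ℝ) < 4 * ((n:ℝ) - 1) := by linarith
    positivity
  have h2 : (0:ℝ) ≤ (inner ℝ w w : ℝ) := real_inner_self_nonneg
  exact mul_nonneg (mul_nonneg h1 (Real.exp_nonneg _)) h2
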